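/- Let K be a field, S = K[x_1,…,x_n], and let I ⊆ S be a squarefree monomial ideal. If D: I = ⊕_{i=1}^r u_i K[Z_i] is a Stanley decomposition of I, then D': I = ⊕_{i : u_i squarefree} u_i K[Z_i ∪ supp(u_i)] is a squarefree Stanley decomposition of I, and sdepth(D') ≥ sdepth(D). -/

import Mathlib

open MvPolynomial

/-- The Stanley space `u K[Z]`: the `K`-span of all monomials `x^(u+τ)` with
`supp τ ⊆ Z`. -/
noncomputable def StanleySpace (K : Type*) [Field K] {n : ℕ} (u : Fin n →₀ ℕ) (Z : Finset (Fin n)) :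
    Submodule K (MvPolynomial (Fin n) K) :=
  Submodule.span K {p | ∃ τ : Fin n →₀ ℕ, (τ.support : Set (Fin n)) ⊆ Z ∧
    p = monomial (u + τ) (1 : K)}

/-- A Stanley decomposition of a monomial ideal `I`: a finite family of Stanley spaces
`u_i K[Z_i]` with `u_i` a monomial of `I`, whose internal direct sum is `I`
(as a `K`-vector space). -/
structure StanleyDecomposition (K : Type*) [Field K] {n : ℕ}
    (I : Ideal (MvPolynomial (Fin n) K)) where
  r : ℕ
  rpos : 0 < r
  u : Fin r → (Fin n →₀ ℕ)
  Z : Fin r → Finset (Fin n)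
  mem : ∀ i, monomial (u i) (1 : K) ∈ I
  isSup : Submodule.restrictScalars K I = ⨆ i, StanleySpace K (u i) (Z i)
  indep : iSupIndep fun i => StanleySpace K (u i) (Z i)

/-- `sdepth 𝒟 = min_i |Z_i|`. -/
def StanleyDecomposition.sdepth {K : Type*} [Field K] {n : ℕ}
    {I : Ideal (MvPolynomial (Fin n) K)} (D : StanleyDecomposition K I) : ℕ :=
  Finset.univ.inf' ⟨⟨0, D.rpos⟩, Finset.mem_univ _⟩ fun i => (D.Z i).card

/-- The Stanley depth of a monomial ideal: the maximum of `sdepth 𝒟` over all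
Stanley decompositions `𝒟` of `I`. -/
noncomputable def Ideal.sdepth (K : Type*) [Field K] {n : ℕ}
    (I : Ideal (MvPolynomial (Fin n) K)) : ℕ :=
  sSup (Set.range fun D : StanleyDecomposition K I => D.sdepth)

/-- The squarefree exponent vector of `x_F = ∏_{i ∈ F} x_i`. -/
noncomputable def sfVec {n : ℕ} (F : Finset (Fin n)) : Fin n →₀ ℕ :=
  Finsupp.indicator F fun _ _ => 1

/-! Everything is read off exponent sets. `u K[Z]` is spanned by the monomials with exponents in
`{a | u ≤ a, a = u off Z}`, and spans of monomial sets are independent exactly when the sets are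
pairwise disjoint. For squarefree `u`, an exponent `a` lies in the set of `u K[Z ∪ supp u]` iff
its squarefree part `√a` lies in the set of `u K[Z]`, and `√a` can only lie there when `u` is
squarefree. Hence the exponent sets of `D'` are the preimages under `a ↦ √a` of those of `D`: they
stay pairwise disjoint, and their union is the preimage of the exponent set of `I`, which is that
set again since whether a monomial lies in a squarefree monomial ideal depends only on its
support. -/
namespace MvPolynomial

variable {R σ : Type*} [CommSemiring R]

theorem restrictSupport_iUnion {ι : Sort*} (s : ι → Set (σ →₀ ℕ)) :
    restrictSupport R (⋃ i, s i) = ⨆ i, restrictSupport R (s i) := by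
  simp_rw [restrictSupport_eq_span, Set.image_iUnion, Submodule.span_iUnion]

theorem disjoint_restrictSupport_iff [Nontrivial R] {s t : Set (σ →₀ ℕ)} :
    Disjoint (restrictSupport R s) (restrictSupport R t) ↔ Disjoint s t := by
  constructor
  · refine fun h => Set.disjoint_left.2 fun a has hat => ?_
    have := Submodule.disjoint_def.1 h (monomial a 1) (by simp [has]) (by simp [hat])
    simp at this
  · intro h
    refine Submodule.disjoint_def.2 fun p hps hpt => ?_
    rw [mem_restrictSupport_iff] at hps hpt
    simpa using h.mono hps hpt

theorem iSupIndep_restrictSupport_iff [Nontrivial R] {ι : Type*} {s : ι → Set (σ →₀ ℕ)} :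
    iSupIndep (fun i => restrictSupport R (s i)) ↔ Pairwise (Function.onFun Disjoint s) := by
  constructor
  · exact fun h i j hij => disjoint_restrictSupport_iff.1 (h.pairwiseDisjoint hij)
  · intro h
    rw [iSupIndep_def]
    intro i
    have hsup : ⨆ (j) (_ : j ≠ i), restrictSupport R (s j) =
        restrictSupport R (⋃ (j) (_ : j ≠ i), s j) := by
      rw [restrictSupport_iUnion]
      exact iSup_congr fun j => (restrictSupport_iUnion _).symm
    rw [hsup, disjoint_restrictSupport_iff, Set.disjoint_iUnion₂_right]
    exact fun j hji => h hji.symm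

end MvPolynomial

open MvPolynomial

section

variable {n : ℕ}

def stanleyExponents (u : Fin n →₀ ℕ) (Z : Finset (Fin n)) : Set (Fin n →₀ ℕ) :=
  {a | u ≤ a ∧ ∀ j ∉ Z, a j = u j}

theorem stanleySpace_eq_restrictSupport (K : Type*) [Field K] (u : Fin n →₀ ℕ)
    (Z : Finset (Fin n)) :
    StanleySpace K u Z = restrictSupport K (stanleyExponents u Z) := by
  rw [restrictSupport_eq_span, StanleySpace]
  congr 1
  ext p
  constructor
  · rintro ⟨τ, hτ, rfl⟩
    refine ⟨u + τ, ⟨le_self_add, fun j hj => ?_⟩, rfl⟩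
    have hτj : τ j = 0 := Finsupp.notMem_support_iff.1 fun h => hj (hτ h)
    simp [hτj]
  · rintro ⟨a, ⟨hua, ha⟩, rfl⟩
    refine ⟨a - u, fun j hj => ?_, by rw [add_tsub_cancel_of_le hua]⟩
    by_contra hjZ
    simp [ha j hjZ] at hj

theorem sfVec_apply (F : Finset (Fin n)) (j : Fin n) : sfVec F j = if j ∈ F then 1 else 0 := by
  simp [sfVec, Finsupp.indicator_apply]

theorem support_sfVec (F : Finset (Fin n)) : (sfVec F).support = F := by
  ext j
  simp [sfVec_apply]

theorem sfVec_le_iff {F : Finset (Fin n)} {a : Fin n →₀ ℕ} : sfVec F ≤ a ↔ F ⊆ a.support := by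
  simp only [Finsupp.le_def, sfVec_apply, Finset.subset_iff, Finsupp.mem_support_iff]
  refine forall_congr' fun j => ?_
  by_cases hj : j ∈ F <;> simp [hj, Nat.one_le_iff_ne_zero]

noncomputable def squarefreePart (a : Fin n →₀ ℕ) : Fin n →₀ ℕ :=
  sfVec a.support

theorem squarefreePart_apply (a : Fin n →₀ ℕ) (j : Fin n) :
    squarefreePart a j = if a j = 0 then 0 else 1 := by
  simp [squarefreePart, sfVec_apply, ite_not]

theorem support_squarefreePart (a : Fin n →₀ ℕ) : (squarefreePart a).support = a.support :=
  support_sfVec _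

theorem stanleyExponents_union_support {u : Fin n →₀ ℕ} (hu : ∀ j, u j ≤ 1)
    (Z : Finset (Fin n)) :
    stanleyExponents u (Z ∪ u.support) = squarefreePart ⁻¹' stanleyExponents u Z := by
  ext a
  simp only [stanleyExponents, Set.mem_ofPred_eq, Set.mem_preimage, Finsupp.le_def,
    squarefreePart_apply, Finset.mem_union, Finsupp.mem_support_iff, ← forall_and]
  refine forall_congr' fun j => ?_
  have := hu j
  by_cases hj : j ∈ Z <;> simp only [hj] <;> split_ifs <;> simp <;> omega

theorem le_one_of_squarefreePart_mem_stanleyExponents {u a : Fin n →₀ ℕ} {Z : Finset (Fin n)}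
    (h : squarefreePart a ∈ stanleyExponents u Z) (j : Fin n) : u j ≤ 1 :=
  (h.1 j).trans (by rw [squarefreePart_apply]; split <;> omega)

theorem iUnion_stanleyExponents_union_support {ι : Type*} (u : ι → Fin n →₀ ℕ)
    (Z : ι → Finset (Fin n)) :
    ⋃ i : {i // ∀ j, u i j ≤ 1}, stanleyExponents (u i) (Z i ∪ (u i).support) =
      squarefreePart ⁻¹' ⋃ i, stanleyExponents (u i) (Z i) := by
  ext a
  simp only [Set.mem_iUnion, Set.mem_preimage]
  constructor
  · rintro ⟨i, ha⟩
    rw [stanleyExponents_union_support i.2] at ha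
    exact ⟨i, ha⟩
  · rintro ⟨i, ha⟩
    have hu := le_one_of_squarefreePart_mem_stanleyExponents ha
    exact ⟨⟨i, hu⟩, by rwa [stanleyExponents_union_support hu]⟩

theorem monomial_mem_span_monomial_sfVec_iff {R ι : Type*} [CommSemiring R] [Nontrivial R]
    (G : ι → Finset (Fin n)) (a : Fin n →₀ ℕ) :
    monomial a (1 : R) ∈ Ideal.span (Set.range fun i => monomial (sfVec (G i)) (1 : R)) ↔
      ∃ i, G i ⊆ a.support := by
  classical
  rw [Set.range_comp' (fun s => monomial s (1 : R)), mem_ideal_span_monomial_image,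
    support_monomial, if_neg one_ne_zero]
  simp [sfVec_le_iff]

theorem monomial_squarefreePart_mem_span_monomial_sfVec_iff {R ι : Type*} [CommSemiring R]
    [Nontrivial R] (G : ι → Finset (Fin n)) (a : Fin n →₀ ℕ) :
    monomial (squarefreePart a) (1 : R) ∈
        Ideal.span (Set.range fun i => monomial (sfVec (G i)) (1 : R)) ↔
      monomial a (1 : R) ∈ Ideal.span (Set.range fun i => monomial (sfVec (G i)) (1 : R)) := by
  simp only [monomial_mem_span_monomial_sfVec_iff, support_squarefreePart]

end

/-- If `I ⊆ K[x₁,…,xₙ]` is a squarefree monomial ideal and `D : I = ⊕ᵢ uᵢ K[Zᵢ]` is a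
Stanley decomposition of `I`, then `D' : I = ⊕_{i : uᵢ squarefree} uᵢ K[Zᵢ ∪ supp uᵢ]`
is a squarefree Stanley decomposition of `I` (the spaces span `I`, are independent and
squarefree) and `sdepth D' ≥ sdepth D`. -/
theorem squarefree_refinement (n : ℕ) (K : Type*) [Field K]
    (I : Ideal (MvPolynomial (Fin n) K))
    (m : ℕ) (G : Fin m → Finset (Fin n))
    (hI : I = Ideal.span (Set.range fun i => monomial (sfVec (G i)) (1 : K)))
    (D : StanleyDecomposition K I) :
    Submodule.restrictScalars K I =
      (⨆ i : {i : Fin D.r // ∀ j, D.u i j ≤ 1},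
        StanleySpace K (D.u i) (D.Z i ∪ (D.u i).support)) ∧
    iSupIndep (fun i : {i : Fin D.r // ∀ j, D.u i j ≤ 1} =>
      StanleySpace K (D.u i) (D.Z i ∪ (D.u i).support)) ∧
    (∀ i : {i : Fin D.r // ∀ j, D.u i j ≤ 1},
      (D.u i).support ⊆ D.Z i ∪ (D.u i).support) ∧
    (∀ i : {i : Fin D.r // ∀ j, D.u i j ≤ 1},
      D.sdepth ≤ (D.Z i ∪ (D.u i).support).card) := by
  set E := ⋃ i, stanleyExponents (D.u i) (D.Z i)
  have hIE : Submodule.restrictScalars K I = restrictSupport K E := by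
    simp_rw [D.isSup, stanleySpace_eq_restrictSupport, E, restrictSupport_iUnion]
  have hE : squarefreePart ⁻¹' E = E := by
    have hmem : ∀ a, a ∈ E ↔ monomial a (1 : K) ∈ I := fun a => by
      rw [← Submodule.restrictScalars_mem K, hIE, monomial_mem_restrictSupport]
      simp
    ext a
    rw [Set.mem_preimage, hmem, hmem, hI, monomial_squarefreePart_mem_span_monomial_sfVec_iff]
  have hD : Pairwise (Function.onFun Disjoint fun i => stanleyExponents (D.u i) (D.Z i)) := by
    simpa only [stanleySpace_eq_restrictSupport, iSupIndep_restrictSupport_iff] using D.indep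
  refine ⟨?_, ?_, fun i => Finset.subset_union_right, fun i => ?_⟩
  · rw [hIE, ← hE, ← iUnion_stanleyExponents_union_support, restrictSupport_iUnion]
    simp_rw [stanleySpace_eq_restrictSupport]
  · simp_rw [stanleySpace_eq_restrictSupport, iSupIndep_restrictSupport_iff]
    intro i j hij
    rw [Function.onFun, stanleyExponents_union_support i.2, stanleyExponents_union_support j.2]
    exact (hD (Subtype.coe_injective.ne hij)).preimage squarefreePart
  · exact (Finset.inf'_le _ (Finset.mem_univ i.1)).trans
      (Finset.card_le_card Finset.subset_union_left)
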